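/- In Z_91, let H₂ = {1,9,81}, and for a subset S of Z_91 let H₂S = {h·s mod 91 : h ∈ H₂, s ∈ S}. Then the pair X = H₂{2,5,14,16,19,20,23,24,29,30,37,40,46,48,49}, Y = H₂{2,4,6,8,13,14,16,23,30,37,38,39,40,46,49} is a difference family in Z_91 with parameters (91; 45, 45; 44). -/

import Mathlib

open Finset

/-- The number of ordered pairs `(a,b) ∈ X × X` with `a - b = s`. -/
def diffCount (X : Finset (ZMod 91)) (s : ZMod 91) : ℕ :=
  ((X ×ˢ X).filter (fun p => p.1 - p.2 = s)).card

def H : Finset (ZMod 91) := {1, 9, 81}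

def X : Finset (ZMod 91) := (H ×ˢ ({2, 5, 14, 16, 19, 20, 23, 24, 29, 30, 37, 40, 46, 48, 49} : Finset (ZMod 91))).image (fun p => p.1 * p.2)

def Y : Finset (ZMod 91) := (H ×ˢ ({2, 4, 6, 8, 13, 14, 16, 23, 30, 37, 38, 39, 40, 46, 49} : Finset (ZMod 91))).image (fun p => p.1 * p.2)

/-!
Multiplication by an element of `H` permutes `X` and `Y`, hence maps the pairs of `X × X` (and of
`Y × Y`) with difference `s` bijectively onto those with difference `h * s`; swapping the two
coordinates relates the differences `s` and `-s`. So both difference counts are constant on the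
orbits of `±H` acting on `ZMod 91`. This action is free on the nonzero residues, which therefore
fall into 15 orbits, and the condition is checked by computation on one representative of each.
-/

lemma diffCount_neg (A : Finset (ZMod 91)) (s : ZMod 91) : diffCount A (-s) = diffCount A s := by
  refine card_bij (fun p _ => p.swap) ?_ (by simp) ?_
  · rintro ⟨a, b⟩ h
    simp only [mem_filter, mem_product, Prod.swap_prod_mk] at h ⊢
    exact ⟨h.1.symm, by rw [← neg_sub, h.2, neg_neg]⟩
  · rintro ⟨a, b⟩ h
    simp only [mem_filter, mem_product] at h
    exact ⟨(b, a), mem_filter.2 ⟨mem_product.2 h.1.symm, by rw [← neg_sub, h.2]⟩, rfl⟩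

section Multiplier

variable {A : Finset (ZMod 91)} {u : ZMod 91}

lemma diffCount_le_diffCount_mul (hu : IsUnit u) (hA : ∀ a ∈ A, u * a ∈ A) (s : ZMod 91) :
    diffCount A s ≤ diffCount A (u * s) := by
  refine card_le_card_of_injOn (fun p => (u * p.1, u * p.2)) ?_ ?_
  · intro p hp
    simp only [coe_filter, mem_product, Set.mem_ofPred_eq] at hp ⊢
    exact ⟨⟨hA _ hp.1.1, hA _ hp.1.2⟩, by rw [← mul_sub, hp.2]⟩
  · intro p _ q _ h
    simp only [Prod.mk.injEq, hu.mul_right_inj] at h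
    exact Prod.ext h.1 h.2

lemma diffCount_le_diffCount_pow_mul (hu : IsUnit u) (hA : ∀ a ∈ A, u * a ∈ A) (s : ZMod 91)
    (k : ℕ) : diffCount A s ≤ diffCount A (u ^ k * s) := by
  induction k with
  | zero => simp
  | succ k ih =>
    rw [pow_succ', mul_assoc]
    exact ih.trans (diffCount_le_diffCount_mul hu hA _)

lemma diffCount_mul_of_pow_eq_one {n : ℕ} (hun : u ^ n = 1) (hn : n ≠ 0)
    (hA : ∀ a ∈ A, u * a ∈ A) (s : ZMod 91) : diffCount A (u * s) = diffCount A s := by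
  have hu := IsUnit.of_pow_eq_one hun hn
  refine le_antisymm ?_ (diffCount_le_diffCount_mul hu hA s)
  calc diffCount A (u * s) ≤ diffCount A (u ^ (n - 1) * (u * s)) :=
        diffCount_le_diffCount_pow_mul hu hA _ _
    _ = diffCount A s := by
        rw [← mul_assoc, ← pow_succ, Nat.sub_add_cancel (Nat.one_le_iff_ne_zero.2 hn), hun, one_mul]

end Multiplier

lemma mul_mem_image_mul {M : Type*} [CommMonoid M] [DecidableEq M] {H S : Finset M} {u : M}
    (hH : ∀ h ∈ H, u * h ∈ H) :
    ∀ a ∈ (H ×ˢ S).image (fun p => p.1 * p.2), u * a ∈ (H ×ˢ S).image (fun p => p.1 * p.2) := by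
  simp only [mem_image, mem_product, Prod.exists, forall_exists_index, and_imp]
  rintro _ h t hh ht rfl
  exact ⟨u * h, t, ⟨hH h hh, ht⟩, mul_assoc u h t⟩

lemma H_mul_mem : ∀ u ∈ H, ∀ h ∈ H, u * h ∈ H := by decide +kernel

lemma H_pow_three : ∀ u ∈ H, u ^ 3 = 1 := by decide

lemma X_mul_mem : ∀ u ∈ H, ∀ a ∈ X, u * a ∈ X := fun u hu => mul_mem_image_mul (H_mul_mem u hu)

lemma Y_mul_mem : ∀ u ∈ H, ∀ a ∈ Y, u * a ∈ Y := fun u hu => mul_mem_image_mul (H_mul_mem u hu)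

def orbitReps : Finset (ZMod 91) := {1, 2, 3, 4, 5, 6, 7, 8, 12, 13, 14, 15, 16, 23, 24}

lemma exists_mem_orbitReps (s : ZMod 91) (hs : s ≠ 0) :
    ∃ r ∈ orbitReps, ∃ h ∈ H, s = h * r ∨ s = -(h * r) := by
  revert s
  decide

lemma diffCount_add_diffCount_orbitReps : ∀ r ∈ orbitReps, diffCount X r + diffCount Y r = 44 := by
  decide +kernel

theorem stmt_6 :
    X.card = 45 ∧ Y.card = 45 ∧
    (∀ s : ZMod 91, s ≠ 0 → diffCount X s + diffCount Y s = 44) := by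
  refine ⟨by decide +kernel, by decide +kernel, fun s hs => ?_⟩
  obtain ⟨r, hr, h, hh, hsr⟩ := exists_mem_orbitReps s hs
  have hX := diffCount_mul_of_pow_eq_one (H_pow_three h hh) three_ne_zero (X_mul_mem h hh) r
  have hY := diffCount_mul_of_pow_eq_one (H_pow_three h hh) three_ne_zero (Y_mul_mem h hh) r
  rcases hsr with rfl | rfl <;>
    simpa only [diffCount_neg, hX, hY] using diffCount_add_diffCount_orbitReps r hr
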